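/- Let ε₀ > 0 and V ∈ L^∞(ℝ) with support contained in [−ε₀, ε₀]. For every f ∈ L²(ℝ), for almost every t ∈ ℝ the function s ↦ (i/2) u(t) sign(t−s) v(s) f(s) is integrable, the function 𝒦_V f(t) := (i/2) ∫_ℝ u(t) sign(t−s) v(s) f(s) ds belongs to L²(ℝ), and ‖𝒦_V f‖_{L²(ℝ)} ≤ (1/2) ‖V‖_{L¹(ℝ)} ‖f‖_{L²(ℝ)}; thus 𝒦_V is a bounded operator on L²(ℝ) of operator norm at most (1/2)‖V‖_{L¹(ℝ)}. -/

import Mathlib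

open MeasureTheory

/-- `u(t) = |ε₀ V(ε₀ t)|^{1/2}`. -/
noncomputable def uProfile (ε₀ : ℝ) (V : ℝ → ℝ) (t : ℝ) : ℝ :=
  Real.sqrt |ε₀ * V (ε₀ * t)|

/-- `v(t) = sign(V(ε₀ t)) u(t)`. -/
noncomputable def vProfile (ε₀ : ℝ) (V : ℝ → ℝ) (t : ℝ) : ℝ :=
  Real.sign (V (ε₀ * t)) * uProfile ε₀ V t

/-- The integral kernel `k(t,s) = (i/2) u(t) sign(t-s) v(s)` of the operator `𝒦_V`. -/
noncomputable def kerKV (ε₀ : ℝ) (V : ℝ → ℝ) (t s : ℝ) : ℂ :=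
  (Complex.I / 2) * (uProfile ε₀ V t : ℝ) * (Real.sign (t - s) : ℝ) * (vProfile ε₀ V s : ℝ)

/-- The integral operator `𝒦_V f(t) = (i/2) ∫ u(t) sign(t-s) v(s) f(s) ds`. -/
noncomputable def opKV (ε₀ : ℝ) (V : ℝ → ℝ) (f : ℝ → ℂ) (t : ℝ) : ℂ :=
  ∫ s, kerKV ε₀ V t s * f s

/-! The kernel is dominated by a rank-one kernel: `|k(t,s)| ≤ (1/2) u(t) u(s)` because
`|sign| ≤ 1` and `|v| ≤ u`. Hence `|𝒦_V f(t)| ≤ (1/2) u(t) ∫ u |f| ≤ (1/2) u(t) ‖u‖₂ ‖f‖₂` by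
Cauchy–Schwarz, and taking the `L²` norm in `t` gives `‖𝒦_V f‖₂ ≤ (1/2) ‖u‖₂² ‖f‖₂`. Finally
`‖u‖₂² = ∫ ε₀ |V(ε₀ t)| dt = ‖V‖₁` by rescaling, and `V ∈ L¹` since it is bounded with compact
support. -/

open scoped ENNReal

theorem MeasureTheory.MemLp.integrable_of_support_subset {α E : Type*} [MeasurableSpace α]
    [NormedAddCommGroup E] {μ : Measure α} {g : α → E} {s : Set α} (hg : MemLp g ∞ μ)
    (hsupp : Function.support g ⊆ s) (hs : μ s ≠ ∞) : Integrable g μ :=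
  memLp_one_iff_integrable.1 <| hg.mono_exponent_of_measure_support_ne_top
    (fun x hx => Function.notMem_support.1 (mt (@hsupp x) hx)) hs le_top

section DominatedKernel

variable {α β 𝕜 : Type*} [MeasurableSpace β] [RCLike 𝕜] {ν : Measure β} {k : α → β → 𝕜}
  {a : α → ℝ} {b : β → ℝ} {f : β → 𝕜} {p q r : ℝ≥0∞} [ENNReal.HolderConjugate r q]

theorem enorm_integral_mul_le_of_norm_le_mul (hk : ∀ t s, ‖k t s‖ ≤ a t * b s)
    (hb : AEStronglyMeasurable b ν) (hf : AEStronglyMeasurable f ν) (t : α) :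
    ‖∫ s, k t s * f s ∂ν‖ₑ ≤ ‖a t‖ₑ * (eLpNorm b r ν * eLpNorm f q ν) := by
  have hpt (s : β) : ‖k t s * f s‖ₑ ≤ ‖a t‖ₑ * ‖(b • f) s‖ₑ := by
    rw [Pi.smul_apply', enorm_smul, ← mul_assoc, ← enorm_mul, enorm_mul (k t s)]
    exact mul_le_mul_left (enorm_le_iff_norm_le.2 ((hk t s).trans (Real.le_norm_self _))) _
  calc ‖∫ s, k t s * f s ∂ν‖ₑ ≤ ∫⁻ s, ‖k t s * f s‖ₑ ∂ν := enorm_integral_le_lintegral_enorm _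
    _ ≤ ∫⁻ s, ‖a t‖ₑ * ‖(b • f) s‖ₑ ∂ν := lintegral_mono hpt
    _ = ‖a t‖ₑ * eLpNorm (b • f) 1 ν := by
      rw [lintegral_const_mul' _ _ enorm_ne_top, eLpNorm_one_eq_lintegral_enorm]
    _ ≤ ‖a t‖ₑ * (eLpNorm b r ν * eLpNorm f q ν) := by
      gcongr
      exact eLpNorm_smul_le_mul_eLpNorm hf hb

variable [MeasurableSpace α] {μ : Measure α}

theorem eLpNorm_integral_mul_le_of_norm_le_mul (hk : ∀ t s, ‖k t s‖ ≤ a t * b s)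
    (ha : AEStronglyMeasurable a μ) (hb : AEStronglyMeasurable b ν)
    (hf : AEStronglyMeasurable f ν) :
    eLpNorm (fun t => ∫ s, k t s * f s ∂ν) p μ ≤
      eLpNorm a p μ * eLpNorm b r ν * eLpNorm f q ν := by
  rw [mul_assoc, mul_comm]
  exact eLpNorm_le_mul_eLpNorm_of_ae_le_mul'' p ha <| ae_of_all _ fun t =>
    (enorm_integral_mul_le_of_norm_le_mul hk hb hf t).trans_eq (mul_comm _ _)

theorem memLp_integral_mul_of_norm_le_mul [SFinite ν] (hk : ∀ t s, ‖k t s‖ ≤ a t * b s)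
    (hkm : AEStronglyMeasurable (Function.uncurry k) (μ.prod ν)) (ha : MemLp a p μ)
    (hb : MemLp b r ν) (hf : MemLp f q ν) :
    MemLp (fun t => ∫ s, k t s * f s ∂ν) p μ :=
  ⟨(hkm.mul hf.1.comp_snd).integral_prod_right',
    (eLpNorm_integral_mul_le_of_norm_le_mul hk ha.1 hb.1 hf.1).trans_lt <|
      ENNReal.mul_lt_top (ENNReal.mul_lt_top ha.eLpNorm_lt_top hb.eLpNorm_lt_top)
        hf.eLpNorm_lt_top⟩

theorem ae_integrable_mul_of_norm_le_mul [SFinite ν] (hk : ∀ t s, ‖k t s‖ ≤ a t * b s)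
    (hkm : AEStronglyMeasurable (Function.uncurry k) (μ.prod ν)) (hb : MemLp b r ν)
    (hf : MemLp f q ν) :
    ∀ᵐ t ∂μ, Integrable (fun s => k t s * f s) ν := by
  filter_upwards [hkm.prodMk_left] with t hkt
  refine ((hb.integrable_mul hf.norm).const_mul (a t)).mono' (hkt.mul hf.1) <|
    ae_of_all _ fun s => ?_
  calc ‖k t s * f s‖ ≤ a t * b s * ‖f s‖ := by rw [norm_mul]; gcongr; exact hk t s
    _ = a t * (b * fun s => ‖f s‖) s := by rw [Pi.mul_apply, mul_assoc]

end DominatedKernel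

section Profiles

variable {ε₀ : ℝ} {V : ℝ → ℝ}

theorem Real.abs_sign_le_one (x : ℝ) : |Real.sign x| ≤ 1 := by
  rcases Real.sign_apply_eq x with h | h | h <;> simp [h]

theorem Real.measurable_sign : Measurable Real.sign :=
  Measurable.ite (measurableSet_lt measurable_id measurable_const) measurable_const <|
    Measurable.ite (measurableSet_lt measurable_const measurable_id) measurable_const
      measurable_const

theorem uProfile_nonneg (ε₀ : ℝ) (V : ℝ → ℝ) (t : ℝ) : 0 ≤ uProfile ε₀ V t :=
  Real.sqrt_nonneg _

theorem abs_vProfile_le (ε₀ : ℝ) (V : ℝ → ℝ) (s : ℝ) :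
    |vProfile ε₀ V s| ≤ uProfile ε₀ V s := by
  rw [vProfile, abs_mul, abs_of_nonneg (uProfile_nonneg ε₀ V s)]
  exact mul_le_of_le_one_left (uProfile_nonneg ε₀ V s) (Real.abs_sign_le_one _)

theorem norm_kerKV_le (ε₀ : ℝ) (V : ℝ → ℝ) (t s : ℝ) :
    ‖kerKV ε₀ V t s‖ ≤ 1 / 2 * uProfile ε₀ V t * uProfile ε₀ V s := by
  simp only [kerKV, norm_mul, norm_div, Complex.norm_I, Complex.norm_ofNat, Complex.norm_real,
    Real.norm_eq_abs, abs_of_nonneg (uProfile_nonneg ε₀ V t)]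
  have hsv : |Real.sign (t - s)| * |vProfile ε₀ V s| ≤ uProfile ε₀ V s :=
    (mul_le_of_le_one_left (abs_nonneg _) (Real.abs_sign_le_one _)).trans (abs_vProfile_le ε₀ V s)
  rw [mul_assoc _ |Real.sign (t - s)|]
  exact mul_le_mul_of_nonneg_left hsv (by have := uProfile_nonneg ε₀ V t; positivity)

theorem aestronglyMeasurable_comp_mul_left (hε₀ : ε₀ ≠ 0)
    (hV : AEStronglyMeasurable V volume) : AEStronglyMeasurable (fun t => V (ε₀ * t)) volume :=
  hV.comp_quasiMeasurePreserving (Measure.quasiMeasurePreserving_smul volume hε₀)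

theorem aestronglyMeasurable_uProfile (hε₀ : ε₀ ≠ 0) (hV : AEStronglyMeasurable V volume) :
    AEStronglyMeasurable (uProfile ε₀ V) volume :=
  (Real.continuous_sqrt.comp continuous_abs).comp_aestronglyMeasurable
    ((aestronglyMeasurable_comp_mul_left hε₀ hV).const_mul ε₀)

theorem aestronglyMeasurable_vProfile (hε₀ : ε₀ ≠ 0) (hV : AEStronglyMeasurable V volume) :
    AEStronglyMeasurable (vProfile ε₀ V) volume :=
  (Real.measurable_sign.comp_aemeasurable
    (aestronglyMeasurable_comp_mul_left hε₀ hV).aemeasurable).aestronglyMeasurable.mul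
    (aestronglyMeasurable_uProfile hε₀ hV)

theorem aestronglyMeasurable_kerKV (hε₀ : ε₀ ≠ 0) (hV : AEStronglyMeasurable V volume) :
    AEStronglyMeasurable (Function.uncurry (kerKV ε₀ V)) (volume.prod volume) := by
  have hsign : Measurable fun z : ℝ × ℝ => Real.sign (z.1 - z.2) :=
    Real.measurable_sign.comp (measurable_fst.sub measurable_snd)
  exact ((aestronglyMeasurable_const.mul (Complex.continuous_ofReal.comp_aestronglyMeasurable
    (aestronglyMeasurable_uProfile hε₀ hV).comp_fst)).mul
    (Complex.measurable_ofReal.comp hsign).aestronglyMeasurable).mul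
    (Complex.continuous_ofReal.comp_aestronglyMeasurable
      (aestronglyMeasurable_vProfile hε₀ hV).comp_snd)

theorem memLp_uProfile (hε₀ : ε₀ ≠ 0) (hV : Integrable V volume) :
    MemLp (uProfile ε₀ V) 2 volume := by
  refine (memLp_two_iff_integrable_sq (aestronglyMeasurable_uProfile hε₀ hV.1)).2 ?_
  simpa only [uProfile, Real.sq_sqrt (abs_nonneg _)] using
    ((hV.comp_mul_left' hε₀).const_mul ε₀).abs

theorem eLpNorm_uProfile_sq (hε₀ : ε₀ ≠ 0) (hV : Integrable V volume) :
    eLpNorm (uProfile ε₀ V) 2 volume ^ 2 = ENNReal.ofReal (∫ t, |V t|) := by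
  have hu : uProfile ε₀ V = fun t => ‖ε₀ * V (ε₀ * t)‖ ^ (1 / 2 : ℝ) := by
    ext t
    rw [uProfile, Real.sqrt_eq_rpow, Real.norm_eq_abs]
  have hexp : (2 : ℝ≥0∞) * ENNReal.ofReal (1 / 2) = 1 := by simp [ENNReal.mul_inv_cancel]
  have hint : ∫ t, ‖ε₀ * V (ε₀ * t)‖ = ∫ t, |V t| := by
    simp_rw [Real.norm_eq_abs, abs_mul]
    rw [integral_const_mul, Measure.integral_comp_mul_left (fun y => |V y|), smul_eq_mul,
      ← mul_assoc, abs_inv, mul_inv_cancel₀ (abs_ne_zero.2 hε₀), one_mul]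
  rw [hu, eLpNorm_norm_rpow _ (by norm_num), hexp, ← ENNReal.rpow_natCast,
    ← ENNReal.rpow_mul, eLpNorm_one_eq_lintegral_enorm,
    ← ofReal_integral_norm_eq_lintegral_enorm ((hV.comp_mul_left' hε₀).const_mul ε₀), hint]
  norm_num

end Profiles

/-- For `V ∈ L^∞(ℝ)` supported in `[-ε₀, ε₀]` and every `f ∈ L²(ℝ)`: for a.e. `t` the
integrand defining `𝒦_V f(t)` is integrable, `𝒦_V f ∈ L²(ℝ)`, and
`‖𝒦_V f‖_{L²} ≤ (1/2) ‖V‖_{L¹} ‖f‖_{L²}`; thus `𝒦_V` is bounded on `L²(ℝ)` with operator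
norm at most `(1/2) ‖V‖_{L¹}`. -/
theorem opKV_bounded (ε₀ : ℝ) (hε₀ : 0 < ε₀) (V : ℝ → ℝ)
    (hV : MemLp V ⊤ (volume : Measure ℝ))
    (hsupp : Function.support V ⊆ Set.Icc (-ε₀) ε₀)
    (f : ℝ → ℂ) (hf : MemLp f 2 (volume : Measure ℝ)) :
    (∀ᵐ t ∂(volume : Measure ℝ), Integrable (fun s => kerKV ε₀ V t s * f s) volume) ∧
    MemLp (opKV ε₀ V f) 2 (volume : Measure ℝ) ∧
    eLpNorm (opKV ε₀ V f) 2 (volume : Measure ℝ) ≤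
      ENNReal.ofReal ((1 / 2) * ∫ t, |V t|) * eLpNorm f 2 (volume : Measure ℝ) := by
  have hVint : Integrable V volume := hV.integrable_of_support_subset hsupp measure_Icc_lt_top.ne
  have hk := aestronglyMeasurable_kerKV hε₀.ne' hV.1
  have hu := memLp_uProfile hε₀.ne' hVint
  refine ⟨ae_integrable_mul_of_norm_le_mul (norm_kerKV_le ε₀ V) hk hu hf,
    memLp_integral_mul_of_norm_le_mul (norm_kerKV_le ε₀ V) hk (hu.const_mul _) hu hf, ?_⟩
  calc eLpNorm (opKV ε₀ V f) 2 volume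
      ≤ eLpNorm (fun t => 1 / 2 * uProfile ε₀ V t) 2 volume * eLpNorm (uProfile ε₀ V) 2 volume *
          eLpNorm f 2 volume :=
        eLpNorm_integral_mul_le_of_norm_le_mul (norm_kerKV_le ε₀ V) (hu.1.const_mul _) hu.1 hf.1
    _ = ENNReal.ofReal (1 / 2 * ∫ t, |V t|) * eLpNorm f 2 volume := by
      rw [show (fun t => 1 / 2 * uProfile ε₀ V t) = (1 / 2 : ℝ) • uProfile ε₀ V from rfl,
        eLpNorm_const_smul, Real.enorm_eq_ofReal (by norm_num),
        ENNReal.ofReal_mul (by norm_num), ← eLpNorm_uProfile_sq hε₀.ne' hVint]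
      ring
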